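/- Let (X,μ) and (Y,ν) be finite measure spaces, f ∈ L¹(X,ℝⁿ), g ∈ L¹(Y,ℝⁿ), h ∈ L¹(X,(0,∞)), k ∈ L¹(Y,(0,∞)). Then the following are equivalent: (1) there exists a stochastic operator S : L¹(Y,ν) → L¹(X,μ) with S g_i = f_i for all i and S k = h; (2) letting α = h dμ and β = k dν, there exists a doubly stochastic operator D : L¹(Y,β) → L¹(X,α) with D(g_i/k) = f_i/h for all i. -/

import Mathlib

/-!
Positive densities make `α = h μ` and `μ` mutually absolutely continuous, and `u ↦ u / h` is a
positive, integral-preserving linear map `L¹(μ) → L¹(α)` with inverse `v ↦ h v` (likewise for `k`).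
Conjugating by these maps sends a stochastic `S` with `S k = h` to `D = T_{1/h} S T_k`, which maps
`1 = k / k` to `h / h = 1` and `gᵢ / k` to `fᵢ / h`; conversely `S = T_h D T_{1/k}`.
-/

open MeasureTheory Filter
open scoped ENNReal

section Stochastic

variable {X Y Z : Type*} [MeasurableSpace X] [MeasurableSpace Y] [MeasurableSpace Z]
  {μ : Measure X} {ν : Measure Y} {ρ : Measure Z}

structure IsStochastic (S : Lp ℝ 1 ν →ₗ[ℝ] Lp ℝ 1 μ) : Prop where
  map_nonneg : ∀ u, 0 ≤ u → 0 ≤ S u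
  integral_map : ∀ u, ∫ x, S u x ∂μ = ∫ y, u y ∂ν

theorem IsStochastic.comp {S : Lp ℝ 1 ν →ₗ[ℝ] Lp ℝ 1 μ} {T : Lp ℝ 1 ρ →ₗ[ℝ] Lp ℝ 1 ν}
    (hS : IsStochastic S) (hT : IsStochastic T) : IsStochastic (S.comp T) :=
  ⟨fun u hu => hS.map_nonneg _ (hT.map_nonneg u hu),
    fun u => (hS.integral_map _).trans (hT.integral_map u)⟩

end Stochastic

section MulLp

variable {Z E : Type*} [MeasurableSpace Z] [NormedAddCommGroup E] [NormedSpace ℝ E]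
  {p : ℝ≥0∞} {ρ₁ ρ₂ : Measure Z} (φ : Z → ℝ) (hac : ρ₂ ≪ ρ₁)
  (hmem : ∀ u : Lp E p ρ₁, MemLp (fun z => φ z • u z) p ρ₂)

noncomputable def mulLp : Lp E p ρ₁ →ₗ[ℝ] Lp E p ρ₂ where
  toFun u := (hmem u).toLp _
  map_add' u v := by
    ext1
    filter_upwards [(hmem u).coeFn_toLp, (hmem v).coeFn_toLp, (hmem (u + v)).coeFn_toLp,
      Lp.coeFn_add ((hmem u).toLp _) ((hmem v).toLp _), hac.ae_le (Lp.coeFn_add u v)]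
      with z hu hv huv hadd hadd'
    rw [huv, hadd, Pi.add_apply, hu, hv, hadd', Pi.add_apply, smul_add]
  map_smul' r u := by
    ext1
    filter_upwards [(hmem u).coeFn_toLp, (hmem (r • u)).coeFn_toLp,
      Lp.coeFn_smul r ((hmem u).toLp _), hac.ae_le (Lp.coeFn_smul r u)]
      with z hu hru hsmul hsmul'
    rw [RingHom.id_apply, hru, hsmul, Pi.smul_apply, hu, hsmul', Pi.smul_apply, smul_comm]

variable {φ hac hmem}

theorem mulLp_ae_eq {u : Lp E p ρ₁} {ψ : Z → E} (hu : u =ᵐ[ρ₁] ψ) :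
    mulLp φ hac hmem u =ᵐ[ρ₂] fun z => φ z • ψ z := by
  filter_upwards [(hmem u).coeFn_toLp, hac.ae_le hu] with z hz hz'
  exact hz.trans (by rw [hz'])

theorem mulLp_nonneg {hmem : ∀ u : Lp ℝ p ρ₁, MemLp (fun z => φ z • u z) p ρ₂}
    (hφ : ∀ z, 0 ≤ φ z) {u : Lp ℝ p ρ₁} (hu : 0 ≤ u) : 0 ≤ mulLp φ hac hmem u := by
  rw [← Lp.coeFn_nonneg] at hu ⊢
  filter_upwards [mulLp_ae_eq (hac := hac) (hmem := hmem) EventuallyEq.rfl, hac.ae_le hu]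
    with z hz hz'
  rw [hz]
  exact mul_nonneg (hφ z) hz'

end MulLp

section Weight

variable {Z : Type*} [MeasurableSpace Z] {ρ : Measure Z} {w : Z → ℝ}

theorem absolutelyContinuous_withDensity_ofReal (hw : Measurable w) (hpos : ∀ z, 0 < w z) :
    ρ ≪ ρ.withDensity fun z => ENNReal.ofReal (w z) :=
  withDensity_absolutelyContinuous' hw.ennreal_ofReal.aemeasurable
    (ae_of_all _ fun z => by simpa using hpos z)

theorem integral_withDensity_ofReal (hw : Measurable w) (hw0 : ∀ z, 0 ≤ w z) (g : Z → ℝ) :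
    ∫ z, g z ∂ρ.withDensity (fun z => ENNReal.ofReal (w z)) = ∫ z, w z * g z ∂ρ := by
  rw [integral_withDensity_eq_integral_toReal_smul hw.ennreal_ofReal
    (ae_of_all _ fun _ => ENNReal.ofReal_lt_top)]
  simp only [ENNReal.toReal_ofReal (hw0 _), smul_eq_mul]

theorem integrable_withDensity_ofReal_iff (hw : Measurable w) (hw0 : ∀ z, 0 ≤ w z) {g : Z → ℝ} :
    Integrable g (ρ.withDensity fun z => ENNReal.ofReal (w z)) ↔
      Integrable (fun z => w z * g z) ρ := by
  rw [integrable_withDensity_iff hw.ennreal_ofReal (ae_of_all _ fun _ => ENNReal.ofReal_lt_top)]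
  simp only [ENNReal.toReal_ofReal (hw0 _), mul_comm]

variable (ρ) (hw : Measurable w) (hpos : ∀ z, 0 < w z)

noncomputable def divWeight :
    Lp ℝ 1 ρ →ₗ[ℝ] Lp ℝ 1 (ρ.withDensity fun z => ENNReal.ofReal (w z)) :=
  mulLp (fun z => (w z)⁻¹) (withDensity_absolutelyContinuous _ _) fun u => by
    rw [memLp_one_iff_integrable, integrable_withDensity_ofReal_iff hw fun z => (hpos z).le]
    refine (L1.integrable_coeFn u).congr (ae_of_all _ fun z => ?_)
    simp only [smul_eq_mul, mul_inv_cancel_left₀ (hpos z).ne']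

noncomputable def mulWeight :
    Lp ℝ 1 (ρ.withDensity fun z => ENNReal.ofReal (w z)) →ₗ[ℝ] Lp ℝ 1 ρ :=
  mulLp w (absolutelyContinuous_withDensity_ofReal hw hpos) fun u =>
    memLp_one_iff_integrable.2 <|
      (integrable_withDensity_ofReal_iff hw fun z => (hpos z).le).1 (L1.integrable_coeFn u)

variable {ρ}

theorem divWeight_ae_eq {u : Lp ℝ 1 ρ} {ψ : Z → ℝ} (hu : u =ᵐ[ρ] ψ) :
    divWeight ρ hw hpos u =ᵐ[ρ.withDensity fun z => ENNReal.ofReal (w z)] fun z => ψ z / w z :=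
  (mulLp_ae_eq hu).trans (ae_of_all _ fun z => inv_mul_eq_div (w z) (ψ z))

theorem mulWeight_ae_eq {u : Lp ℝ 1 (ρ.withDensity fun z => ENNReal.ofReal (w z))} {ψ : Z → ℝ}
    (hu : u =ᵐ[ρ.withDensity fun z => ENNReal.ofReal (w z)] ψ) :
    mulWeight ρ hw hpos u =ᵐ[ρ] fun z => w z * ψ z :=
  mulLp_ae_eq hu

variable (ρ) in
theorem isStochastic_divWeight : IsStochastic (divWeight ρ hw hpos) where
  map_nonneg _ := mulLp_nonneg fun z => (inv_pos.2 (hpos z)).le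
  integral_map u := by
    rw [integral_congr_ae (divWeight_ae_eq hw hpos EventuallyEq.rfl),
      integral_withDensity_ofReal hw fun z => (hpos z).le]
    exact integral_congr_ae (ae_of_all _ fun z => mul_div_cancel₀ _ (hpos z).ne')

variable (ρ) in
theorem isStochastic_mulWeight : IsStochastic (mulWeight ρ hw hpos) where
  map_nonneg _ := mulLp_nonneg fun z => (hpos z).le
  integral_map u := by
    rw [integral_congr_ae (mulWeight_ae_eq hw hpos EventuallyEq.rfl),
      integral_withDensity_ofReal hw fun z => (hpos z).le]

end Weight

theorem matrix_maj_with_weights_iff_multivariate_maj_general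
    {n : ℕ} {X Y : Type*} [MeasurableSpace X] [MeasurableSpace Y]
    (μ : Measure X) (ν : Measure Y)
    (f : Fin n → X → ℝ)
    (g : Fin n → Y → ℝ)
    (h : X → ℝ) (hhm : Measurable h) (hhpos : ∀ x, 0 < h x)
    (k : Y → ℝ) (hkm : Measurable k) (hkpos : ∀ y, 0 < k y) :
    -- (1) a stochastic operator mapping each gᵢ to fᵢ and k to h
    (∃ S : Lp ℝ 1 ν →ₗ[ℝ] Lp ℝ 1 μ,
      (∀ u : Lp ℝ 1 ν, 0 ≤ u → 0 ≤ S u) ∧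
      (∀ u : Lp ℝ 1 ν, ∫ x, S u x ∂μ = ∫ y, u y ∂ν) ∧
      (∀ i, ∀ u : Lp ℝ 1 ν, (u : Y → ℝ) =ᵐ[ν] g i → (S u : X → ℝ) =ᵐ[μ] f i) ∧
      (∀ u : Lp ℝ 1 ν, (u : Y → ℝ) =ᵐ[ν] k → (S u : X → ℝ) =ᵐ[μ] h))
    ↔
    -- (2) a doubly stochastic operator between the weighted spaces
    -- mapping each gᵢ/k to fᵢ/h, where α = h dμ and β = k dν
    (∃ D : Lp ℝ 1 (ν.withDensity fun y => ENNReal.ofReal (k y)) →ₗ[ℝ]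
          Lp ℝ 1 (μ.withDensity fun x => ENNReal.ofReal (h x)),
      (∀ u, 0 ≤ u → 0 ≤ D u) ∧
      (∀ u, ∫ x, D u x ∂(μ.withDensity fun x => ENNReal.ofReal (h x)) =
            ∫ y, u y ∂(ν.withDensity fun y => ENNReal.ofReal (k y))) ∧
      (∀ u : Lp ℝ 1 (ν.withDensity fun y => ENNReal.ofReal (k y)),
        (u : Y → ℝ) =ᵐ[ν.withDensity fun y => ENNReal.ofReal (k y)] (fun _ => (1 : ℝ)) →
        (D u : X → ℝ) =ᵐ[μ.withDensity fun x => ENNReal.ofReal (h x)] fun _ => (1 : ℝ)) ∧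
      (∀ i, ∀ u : Lp ℝ 1 (ν.withDensity fun y => ENNReal.ofReal (k y)),
        (u : Y → ℝ) =ᵐ[ν.withDensity fun y => ENNReal.ofReal (k y)]
            (fun y => g i y / k y) →
        (D u : X → ℝ) =ᵐ[μ.withDensity fun x => ENNReal.ofReal (h x)]
            fun x => f i x / h x)) := by
  constructor
  · rintro ⟨S, hSpos, hSint, hSg, hSk⟩
    have hD := (isStochastic_divWeight μ hhm hhpos).comp
      ((IsStochastic.mk hSpos hSint).comp (isStochastic_mulWeight ν hkm hkpos))
    refine ⟨_, hD.map_nonneg, hD.integral_map, fun u hu => ?_, fun i u hu => ?_⟩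
    · have hku : mulWeight ν hkm hkpos u =ᵐ[ν] k :=
        (mulWeight_ae_eq hkm hkpos hu).trans (ae_of_all _ fun y => mul_one (k y))
      exact (divWeight_ae_eq hhm hhpos (hSk _ hku)).trans
        (ae_of_all _ fun x => div_self (hhpos x).ne')
    · have hgu : mulWeight ν hkm hkpos u =ᵐ[ν] g i :=
        (mulWeight_ae_eq hkm hkpos hu).trans
          (ae_of_all _ fun y => mul_div_cancel₀ _ (hkpos y).ne')
      exact divWeight_ae_eq hhm hhpos (hSg i _ hgu)
  · rintro ⟨D, hDpos, hDint, hD1, hDg⟩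
    have hS := (isStochastic_mulWeight μ hhm hhpos).comp
      ((IsStochastic.mk hDpos hDint).comp (isStochastic_divWeight ν hkm hkpos))
    refine ⟨_, hS.map_nonneg, hS.integral_map, fun i u hu => ?_, fun u hu => ?_⟩
    · exact (mulWeight_ae_eq hhm hhpos (hDg i _ (divWeight_ae_eq hkm hkpos hu))).trans
        (ae_of_all _ fun x => mul_div_cancel₀ _ (hhpos x).ne')
    · have h1u : divWeight ν hkm hkpos u =ᵐ[ν.withDensity fun y => ENNReal.ofReal (k y)] 1 :=
        (divWeight_ae_eq hkm hkpos hu).trans (ae_of_all _ fun y => div_self (hkpos y).ne')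
      exact (mulWeight_ae_eq hhm hhpos (hD1 _ h1u)).trans (ae_of_all _ fun x => mul_one (h x))

theorem matrix_maj_with_weights_iff_multivariate_maj
    {n : ℕ} {X Y : Type*} [MeasurableSpace X] [MeasurableSpace Y]
    (μ : Measure X) (ν : Measure Y) [IsFiniteMeasure μ] [IsFiniteMeasure ν]
    (f : Fin n → X → ℝ) (hf : ∀ i, Integrable (f i) μ)
    (g : Fin n → Y → ℝ) (hg : ∀ i, Integrable (g i) ν)
    (h : X → ℝ) (hhm : Measurable h) (hh : Integrable h μ) (hhpos : ∀ x, 0 < h x)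
    (k : Y → ℝ) (hkm : Measurable k) (hk : Integrable k ν) (hkpos : ∀ y, 0 < k y) :
    -- (1) a stochastic operator mapping each gᵢ to fᵢ and k to h
    (∃ S : Lp ℝ 1 ν →ₗ[ℝ] Lp ℝ 1 μ,
      (∀ u : Lp ℝ 1 ν, 0 ≤ u → 0 ≤ S u) ∧
      (∀ u : Lp ℝ 1 ν, ∫ x, S u x ∂μ = ∫ y, u y ∂ν) ∧
      (∀ i, ∀ u : Lp ℝ 1 ν, (u : Y → ℝ) =ᵐ[ν] g i → (S u : X → ℝ) =ᵐ[μ] f i) ∧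
      (∀ u : Lp ℝ 1 ν, (u : Y → ℝ) =ᵐ[ν] k → (S u : X → ℝ) =ᵐ[μ] h))
    ↔
    -- (2) a doubly stochastic operator between the weighted spaces
    -- mapping each gᵢ/k to fᵢ/h, where α = h dμ and β = k dν
    (∃ D : Lp ℝ 1 (ν.withDensity fun y => ENNReal.ofReal (k y)) →ₗ[ℝ]
          Lp ℝ 1 (μ.withDensity fun x => ENNReal.ofReal (h x)),
      (∀ u, 0 ≤ u → 0 ≤ D u) ∧
      (∀ u, ∫ x, D u x ∂(μ.withDensity fun x => ENNReal.ofReal (h x)) =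
            ∫ y, u y ∂(ν.withDensity fun y => ENNReal.ofReal (k y))) ∧
      (∀ u : Lp ℝ 1 (ν.withDensity fun y => ENNReal.ofReal (k y)),
        (u : Y → ℝ) =ᵐ[ν.withDensity fun y => ENNReal.ofReal (k y)] (fun _ => (1 : ℝ)) →
        (D u : X → ℝ) =ᵐ[μ.withDensity fun x => ENNReal.ofReal (h x)] fun _ => (1 : ℝ)) ∧
      (∀ i, ∀ u : Lp ℝ 1 (ν.withDensity fun y => ENNReal.ofReal (k y)),
        (u : Y → ℝ) =ᵐ[ν.withDensity fun y => ENNReal.ofReal (k y)]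
            (fun y => g i y / k y) →
        (D u : X → ℝ) =ᵐ[μ.withDensity fun x => ENNReal.ofReal (h x)]
            fun x => f i x / h x)) :=
  matrix_maj_with_weights_iff_multivariate_maj_general μ ν f g h hhm hhpos k hkm hkpos
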